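/- arXiv:2503.16877 — 4 statements merged into one kernel-verified Lean document; each statement's English description precedes it below -/
import Mathlib

section
/- Let μ denote Lebesgue measure on ℝ², let n ≥ 1, and let g_0, …, g_{n−1} : ℝ² → ℝ² be bijections (the one-step exact flow maps). For 0 ≤ j ≤ m ≤ n let Φ_{j,m} denote the map on subsets of ℝ² given by taking the image under g_{m−1} ∘ ⋯ ∘ g_j (the identity when j = m). Let M_exact ⊆ ℝ² be the exact initial region, and let M^0, …, M^n ⊆ ℝ² (the numerical regions), Mψ^0, …, Mψ^{n−1} ⊆ ℝ² (the augmented regions), and Mφ^0, …, Mφ^{n−1} ⊆ ℝ² (the regions after the discrete flow map) be arbitrary subsets. Then μ(Φ_{0,n}(M_exact) Δ M^n) ≤ E_REP + E_AUG + E_MAP + E_ADJ, where E_REP = μ(Φ_{0,n}(M_exact) Δ Φ_{0,n}(M^0)), E_AUG = μ(⨁_{j=0}^{n−1} (Φ_{j,n}(Mψ^j) Δ Φ_{j,n}(M^j))), E_MAP = μ(⨁_{j=0}^{n−1} (Φ_{j+1,n}(g_j(Mψ^j)) Δ Φ_{j+1,n}(Mφ^j))), and E_ADJ = μ(⨁_{j=0}^{n−1}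 (Φ_{j+1,n}(Mφ^j) Δ Φ_{j+1,n}(M^{j+1}))). -/
open MeasureTheory

/-- `iterComp g j k` is the composition `g (j+k-1) ∘ ⋯ ∘ g (j+1) ∘ g j`
(the identity for `k = 0`). -/
def iterComp {α : Type*} (g : ℕ → α → α) (j : ℕ) : ℕ → α → α
  | 0 => id
  | k + 1 => g (j + k) ∘ iterComp g j k

/-- `Phi g j m` is the map on subsets given by taking the image under
`g (m-1) ∘ ⋯ ∘ g j` (the identity when `j = m`). -/
def Phi {α : Type*} (g : ℕ → α → α) (j m : ℕ) (S : Set α) : Set α :=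
  iterComp g j (m - j) '' S

/-- `iterSymmDiff A n` is the iterated symmetric difference
`A 0 ∆ A 1 ∆ ⋯ ∆ A (n-1)`. -/
def iterSymmDiff {α : Type*} (A : ℕ → Set α) : ℕ → Set α
  | 0 => ∅
  | n + 1 => symmDiff (iterSymmDiff A n) (A n)

lemma iterComp_succ' {α : Type*} (g : ℕ → α → α) (j k : ℕ) :
    iterComp g j (k + 1) = iterComp g (j + 1) k ∘ g j := by
  induction k with
  | zero => simp [iterComp]
  | succ k ih =>
      show g (j + (k+1)) ∘ iterComp g j (k+1) = _
      rw [ih]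
      show g (j + (k+1)) ∘ (iterComp g (j+1) k ∘ g j)
        = (g (j + 1 + k) ∘ iterComp g (j+1) k) ∘ g j
      have : j + (k + 1) = j + 1 + k := by omega
      rw [this, Function.comp_assoc]

lemma Phi_self {α : Type*} (g : ℕ → α → α) (n : ℕ) (S : Set α) :
    Phi g n n S = S := by
  simp [Phi, iterComp]

lemma Phi_succ_right {α : Type*} (g : ℕ → α → α) {j n : ℕ} (h : j ≤ n) (S : Set α) :
    Phi g j (n + 1) S = g n '' Phi g j n S := by
  have h1 : n + 1 - j = (n - j) + 1 := by omega
  have h2 : j + (n - j) = n := by omega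
  simp only [Phi, h1]
  show (g (j + (n - j)) ∘ iterComp g j (n - j)) '' S = _
  rw [h2, Set.image_comp]

lemma Phi_g {α : Type*} (g : ℕ → α → α) {j n : ℕ} (h : j < n) (S : Set α) :
    Phi g (j + 1) n (g j '' S) = Phi g j n S := by
  have h1 : n - j = (n - (j + 1)) + 1 := by omega
  simp only [Phi, h1, iterComp_succ', ← Set.image_comp]

lemma iterSymmDiff_congr {α : Type*} {A B : ℕ → Set α} {n : ℕ}
    (h : ∀ j < n, A j = B j) : iterSymmDiff A n = iterSymmDiff B n := by
  induction n with
  | zero => rfl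
  | succ n ih =>
      show symmDiff _ _ = symmDiff _ _
      rw [ih fun j hj => h j (by omega), h n (by omega)]

lemma image_iterSymmDiff {α : Type*} {f : α → α} (hf : Function.Injective f)
    (A : ℕ → Set α) (n : ℕ) :
    iterSymmDiff (fun j => f '' A j) n = f '' iterSymmDiff A n := by
  induction n with
  | zero => simp [iterSymmDiff]
  | succ n ih =>
      show symmDiff _ _ = _
      rw [ih]
      exact (Set.image_symmDiff hf _ _).symm

noncomputable def indZ {α : Type*} (S : Set α) (x : α) : ZMod 2 := by
  classical exact if x ∈ S then 1 else 0

lemma indZ_symmDiff {α : Type*} (A B : Set α) (x : α) :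
    indZ (symmDiff A B) x = indZ A x + indZ B x := by
  classical
  by_cases hA : x ∈ A <;> by_cases hB : x ∈ B <;>
    simp [indZ, Set.mem_symmDiff, hA, hB] <;> decide

lemma indZ_ext {α : Type*} {A B : Set α} (h : ∀ x, indZ A x = indZ B x) : A = B := by
  classical
  ext x
  have := h x
  by_cases hA : x ∈ A <;> by_cases hB : x ∈ B <;> simp_all [indZ]

lemma symm_alg {α : Type*} (a b c p d z m q m1 : Set α)
    (h : symmDiff a m = symmDiff (symmDiff (symmDiff (symmDiff a b) c) p) d) :
    symmDiff a m1 =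
      symmDiff (symmDiff (symmDiff (symmDiff a b) (symmDiff c (symmDiff z m)))
        (symmDiff p (symmDiff z q))) (symmDiff d (symmDiff q m1)) := by
  apply indZ_ext
  intro x
  have hx := congrFun (congrArg indZ h) x
  simp only [indZ_symmDiff] at hx ⊢
  have h2 : (2 : ZMod 2) = 0 := rfl
  linear_combination hx - (indZ z x + indZ m x + indZ q x) * h2

lemma mars_key {α : Type*} (n : ℕ) (g : ℕ → α → α)
    (hg : ∀ j < n, Function.Bijective (g j))
    (Mexact : Set α) (M Mψ Mφ : ℕ → Set α) :
    symmDiff (Phi g 0 n Mexact) (M n) =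
      symmDiff (symmDiff (symmDiff
        (symmDiff (Phi g 0 n Mexact) (Phi g 0 n (M 0)))
        (iterSymmDiff (fun j => symmDiff (Phi g j n (Mψ j)) (Phi g j n (M j))) n))
        (iterSymmDiff (fun j => symmDiff (Phi g (j + 1) n (g j '' Mψ j)) (Phi g (j + 1) n (Mφ j))) n))
        (iterSymmDiff (fun j => symmDiff (Phi g (j + 1) n (Mφ j)) (Phi g (j + 1) n (M (j + 1)))) n) := by
  induction n with
  | zero =>
      simp only [iterSymmDiff, Phi_self, ← Set.bot_eq_empty, symmDiff_bot]
  | succ n ih =>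
      have hgn : Function.Injective (g n) := (hg n (by omega)).injective
      have ih' := ih (fun j hj => hg j (by omega))
      have hA : iterSymmDiff (fun j => symmDiff (Phi g j (n+1) (Mψ j)) (Phi g j (n+1) (M j))) (n+1)
          = symmDiff (g n '' iterSymmDiff (fun j => symmDiff (Phi g j n (Mψ j)) (Phi g j n (M j))) n)
              (symmDiff (g n '' Mψ n) (g n '' M n)) := by
        show symmDiff _ (symmDiff (Phi g n (n+1) (Mψ n)) (Phi g n (n+1) (M n))) = _
        congr 1
        · rw [← image_iterSymmDiff hgn]
          apply iterSymmDiff_congr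
          intro j hj
          rw [Phi_succ_right g (by omega), Phi_succ_right g (by omega),
            Set.image_symmDiff hgn]
        · rw [Phi_succ_right g le_rfl, Phi_succ_right g le_rfl, Phi_self, Phi_self]
      have hM : iterSymmDiff (fun j => symmDiff (Phi g (j+1) (n+1) (g j '' Mψ j)) (Phi g (j+1) (n+1) (Mφ j))) (n+1)
          = symmDiff (g n '' iterSymmDiff (fun j => symmDiff (Phi g (j+1) n (g j '' Mψ j)) (Phi g (j+1) n (Mφ j))) n)
              (symmDiff (g n '' Mψ n) (Mφ n)) := by
        show symmDiff _ (symmDiff (Phi g (n+1) (n+1) (g n '' Mψ n)) (Phi g (n+1) (n+1) (Mφ n))) = _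
        congr 1
        · rw [← image_iterSymmDiff hgn]
          apply iterSymmDiff_congr
          intro j hj
          rw [Phi_succ_right g (by omega), Phi_succ_right g (by omega),
            Set.image_symmDiff hgn]
        · rw [Phi_self, Phi_self]
      have hD : iterSymmDiff (fun j => symmDiff (Phi g (j+1) (n+1) (Mφ j)) (Phi g (j+1) (n+1) (M (j+1)))) (n+1)
          = symmDiff (g n '' iterSymmDiff (fun j => symmDiff (Phi g (j+1) n (Mφ j)) (Phi g (j+1) n (M (j+1)))) n)
              (symmDiff (Mφ n) (M (n+1))) := by
        show symmDiff _ (symmDiff (Phi g (n+1) (n+1) (Mφ n)) (Phi g (n+1) (n+1) (M (n+1)))) = _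
        congr 1
        · rw [← image_iterSymmDiff hgn]
          apply iterSymmDiff_congr
          intro j hj
          rw [Phi_succ_right g (by omega), Phi_succ_right g (by omega),
            Set.image_symmDiff hgn]
        · rw [Phi_self, Phi_self]
      rw [hA, hM, hD, Phi_succ_right g (Nat.zero_le n) Mexact,
        Phi_succ_right g (Nat.zero_le n) (M 0)]
      have h2 := congrArg (fun S => g n '' S) ih'
      simp only [Set.image_symmDiff hgn] at h2
      exact symm_alg _ _ _ _ _ _ _ _ _ h2

/-- The fundamental error bound for MARS methods: the interface-tracking error
at time `t_n` is bounded by the sum of the representation, augmentation,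
mapping, and adjustment errors. -/
theorem mars_error_bound (n : ℕ) (hn : 1 ≤ n)
    (g : ℕ → EuclideanSpace ℝ (Fin 2) → EuclideanSpace ℝ (Fin 2))
    (hg : ∀ j < n, Function.Bijective (g j))
    (Mexact : Set (EuclideanSpace ℝ (Fin 2)))
    (M Mψ Mφ : ℕ → Set (EuclideanSpace ℝ (Fin 2))) :
    volume (symmDiff (Phi g 0 n Mexact) (M n)) ≤
      volume (symmDiff (Phi g 0 n Mexact) (Phi g 0 n (M 0)))
      + volume (iterSymmDiff
          (fun j => symmDiff (Phi g j n (Mψ j)) (Phi g j n (M j))) n)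
      + volume (iterSymmDiff
          (fun j => symmDiff (Phi g (j + 1) n (g j '' Mψ j)) (Phi g (j + 1) n (Mφ j))) n)
      + volume (iterSymmDiff
          (fun j => symmDiff (Phi g (j + 1) n (Mφ j)) (Phi g (j + 1) n (M (j + 1)))) n) := by
  rw [mars_key n g hg Mexact M Mψ Mφ]
  have hb : ∀ (A B : Set (EuclideanSpace ℝ (Fin 2))),
      volume (symmDiff A B) ≤ volume A + volume B := fun A B =>
    le_trans (measure_mono symmDiff_le_sup) (measure_union_le A B)
  calc volume (symmDiff (symmDiff (symmDiff _ _) _) _)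
      ≤ volume (symmDiff (symmDiff _ _) _) + volume _ := hb _ _
    _ ≤ (volume (symmDiff _ _) + volume _) + volume _ := by gcongr; exact hb _ _
    _ ≤ ((volume _ + volume _) + volume _) + volume _ := by gcongr; exact hb _ _
    _ = _ := by ring
end

section
/- (Reynolds transport theorem, divergence form.) Let v : ℝ → ℝ² → ℝ² be infinitely differentiable jointly in time and space, and let φ : ℝ → ℝ² → ℝ² be infinitely differentiable jointly in time and space with φ(0, ·) = id, with φ(t, ·) : ℝ² → ℝ² a bijection for every t, and such that for all x and t the derivative of s ↦ φ(s, x) at t equals v(t, φ(t, x)). Let V ⊆ ℝ² be compact and measurable, and let f : ℝ → ℝ² → ℝ be infinitely differentiable jointly in time and space. Then for every t, the function s ↦ ∫_{φ(s,·)''V} f(s, x) dx has derivative at t equal to ∫_{φ(t,·)''V} ( ∂f/∂t(t, x) + div_x( f(t, ·) · v(t, ·) )(x) ) dx, where div_x(f v) = ∂(f v₁)/∂x₁ + ∂(f v₂)/∂x₂ and integrals are with respect to Lebesgue measure on ℝ². -/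
open MeasureTheory
open scoped ContDiff

noncomputable section

abbrev E2 := EuclideanSpace ℝ (Fin 2)
def e (i : Fin 2) : E2 := EuclideanSpace.single i 1

lemma h1le : (∞ : WithTop ℕ∞) ≠ 0 := by simp

lemma decomp (u : E2) : u 0 • e 0 + u 1 • e 1 = u := by
  ext i
  fin_cases i <;> simp [e, EuclideanSpace.single_apply]

lemma apply_decomp {F : Type*} [NormedAddCommGroup F] [NormedSpace ℝ F]
    (T : E2 →L[ℝ] F) (u : E2) : T u = u 0 • T (e 0) + u 1 • T (e 1) := by
  rw [← _root_.map_smul, ← _root_.map_smul, ← _root_.map_add, decomp]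

lemma pair_decomp (u : E2) :
    ((0 : ℝ), u) = u 0 • ((0:ℝ), e 0) + u 1 • ((0:ℝ), e 1) := by
  rw [Prod.smul_mk, Prod.smul_mk, Prod.mk_add_mk, decomp]
  simp

lemma clm_det (T : E2 →L[ℝ] E2) :
    T.det = T (e 0) 0 * T (e 1) 1 - T (e 0) 1 * T (e 1) 0 := by
  rw [ContinuousLinearMap.det, ← LinearMap.det_toMatrix (EuclideanSpace.basisFun (Fin 2) ℝ).toBasis,
    Matrix.det_fin_two]
  simp [LinearMap.toMatrix_apply, e, OrthonormalBasis.coe_toBasis_repr_apply,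
    OrthonormalBasis.coe_toBasis, mul_comm]

variable {F : Type*} [NormedAddCommGroup F] [NormedSpace ℝ F]

lemma hasFDerivAt_curry_right (g : ℝ × E2 → F) (hg : ContDiff ℝ ∞ g) (s : ℝ) (x : E2) :
    HasFDerivAt (fun y => g (s, y))
      ((fderiv ℝ g (s, x)).comp (ContinuousLinearMap.inr ℝ ℝ E2)) x :=
  (hg.differentiable h1le (s, x)).hasFDerivAt.comp x (hasFDerivAt_prodMk_right s x)

lemma fderiv_curry_right (g : ℝ × E2 → F) (hg : ContDiff ℝ ∞ g) (s : ℝ) (x : E2) (w : E2) :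
    fderiv ℝ (fun y => g (s, y)) x w = fderiv ℝ g (s, x) (0, w) := by
  rw [(hasFDerivAt_curry_right g hg s x).fderiv]; rfl

lemma hasDerivAt_curry_left (g : ℝ × E2 → F) (hg : ContDiff ℝ ∞ g) (s : ℝ) (x : E2) :
    HasDerivAt (fun s' => g (s', x)) (fderiv ℝ g (s, x) (1, 0)) s :=
  (hg.differentiable h1le (s, x)).hasFDerivAt.comp_hasDerivAt s
    ((hasDerivAt_id s).prodMk (hasDerivAt_const s x))

lemma contDiff_fderiv (g : ℝ × E2 → F) (hg : ContDiff ℝ ∞ g) :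
    ContDiff ℝ ∞ (fderiv ℝ g) :=
  hg.fderiv_right (by simp)

lemma hasDerivAt_fderiv_swap (g : ℝ × E2 → F) (hg : ContDiff ℝ ∞ g) (t : ℝ) (y : E2) (w : E2) :
    HasDerivAt (fun s => fderiv ℝ g (s, y) (0, w))
      (fderiv ℝ (fun p : ℝ × E2 => fderiv ℝ g p (1, 0)) (t, y) (0, w)) t := by
  have hΨ : ContDiff ℝ ∞ (fderiv ℝ g) := contDiff_fderiv g hg
  have step1 := hasDerivAt_curry_left (fderiv ℝ g) hΨ t y
  have step2 := (ContinuousLinearMap.apply ℝ F ((0, w) : ℝ × E2)).hasFDerivAt.comp_hasDerivAt t step1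
  have hsymm : fderiv ℝ (fderiv ℝ g) (t, y) (1, 0) (0, w)
      = fderiv ℝ (fderiv ℝ g) (t, y) (0, w) (1, 0) :=
    second_derivative_symmetric
      (fun p => (hg.differentiable h1le p).hasFDerivAt)
      ((hΨ.differentiable h1le (t, y)).hasFDerivAt) _ _
  have step4 : fderiv ℝ (fun p : ℝ × E2 => fderiv ℝ g p (1, 0)) (t, y)
      = (ContinuousLinearMap.apply ℝ F ((1, 0) : ℝ × E2)).comp (fderiv ℝ (fderiv ℝ g) (t, y)) :=
    ((ContinuousLinearMap.apply ℝ F ((1, 0) : ℝ × E2)).hasFDerivAt.comp (t, y)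
      (hΨ.differentiable h1le (t, y)).hasFDerivAt).fderiv
  have heq : (fun s => fderiv ℝ g (s, y) (0, w)) = fun s =>
      (ContinuousLinearMap.apply ℝ F ((0, w) : ℝ × E2)) (fderiv ℝ g (s, y)) := rfl
  rw [heq, step4]
  simpa [hsymm, Function.comp_def] using step2

section Flow

variable (v φ : ℝ → E2 → E2)

/-- Jacobian matrix entries of the flow. -/
def aM (s : ℝ) (y : E2) (i j : Fin 2) : ℝ :=
  fderiv ℝ (fun p : ℝ × E2 => φ p.1 p.2) (s, y) (0, e j) i

/-- Jacobian determinant of the flow. -/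
def dM (s : ℝ) (y : E2) : ℝ :=
  aM φ s y 0 0 * aM φ s y 1 1 - aM φ s y 0 1 * aM φ s y 1 0

/-- Spatial derivative matrix of the velocity field. -/
def BM (s : ℝ) (x : E2) (i k : Fin 2) : ℝ := fderiv ℝ (v s) x (e k) i

/-- Divergence (trace) of the velocity field's spatial derivative. -/
def trB (s : ℝ) (x : E2) : ℝ := BM v s x 0 0 + BM v s x 1 1

variable {v φ}
variable (hv : ContDiff ℝ ∞ (fun p : ℝ × E2 => v p.1 p.2))
  (hφ : ContDiff ℝ ∞ (fun p : ℝ × E2 => φ p.1 p.2))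
  (hode : ∀ (x : E2) (t : ℝ), HasDerivAt (fun s => φ s x) (v t (φ t x)) t)

include hφ in
lemma fderiv_phi (s : ℝ) (y : E2) (w : E2) :
    fderiv ℝ (φ s) y w = fderiv ℝ (fun p : ℝ × E2 => φ p.1 p.2) (s, y) (0, w) :=
  fderiv_curry_right _ hφ s y w

include hv in
lemma fderiv_v (s : ℝ) (x : E2) (w : E2) :
    fderiv ℝ (v s) x w = fderiv ℝ (fun p : ℝ × E2 => v p.1 p.2) (s, x) (0, w) :=
  fderiv_curry_right _ hv s x w

include hφ hode in
lemma fderiv_phi_time (p : ℝ × E2) :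
    fderiv ℝ (fun p : ℝ × E2 => φ p.1 p.2) p (1, 0) = v p.1 (φ p.1 p.2) :=
  (hasDerivAt_curry_left _ hφ p.1 p.2).unique (hode p.2 p.1)

include hv hφ hode in
lemma hasDerivAt_A (y w : E2) (s : ℝ) :
    HasDerivAt (fun s' => fderiv ℝ (fun p : ℝ × E2 => φ p.1 p.2) (s', y) (0, w))
      (fderiv ℝ (v s) (φ s y)
        (fderiv ℝ (fun p : ℝ × E2 => φ p.1 p.2) (s, y) (0, w))) s := by
  set Φ : ℝ × E2 → E2 := fun p => φ p.1 p.2 with hΦdef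
  set Vu : ℝ × E2 → E2 := fun p => v p.1 p.2 with hVudef
  have hswap := hasDerivAt_fderiv_swap Φ hφ s y w
  have hfun : (fun p : ℝ × E2 => fderiv ℝ Φ p (1, 0)) = fun p => Vu (p.1, Φ p) :=
    funext fun p => fderiv_phi_time hφ hode p
  rw [hfun] at hswap
  have hinner : HasFDerivAt (fun p : ℝ × E2 => (p.1, Φ p))
      ((ContinuousLinearMap.fst ℝ ℝ E2).prod (fderiv ℝ Φ (s, y))) (s, y) :=
    hasFDerivAt_fst.prodMk (hφ.differentiable h1le (s, y)).hasFDerivAt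
  have hcomp : HasFDerivAt (fun p : ℝ × E2 => Vu (p.1, Φ p))
      ((fderiv ℝ Vu (s, Φ (s, y))).comp
        ((ContinuousLinearMap.fst ℝ ℝ E2).prod (fderiv ℝ Φ (s, y)))) (s, y) :=
    ((hv.differentiable h1le (s, Φ (s, y))).hasFDerivAt.comp (s, y) hinner :)
  have hfd : fderiv ℝ (fun p : ℝ × E2 => Vu (p.1, Φ p)) (s, y) (0, w)
      = fderiv ℝ Vu (s, Φ (s, y)) (0, fderiv ℝ Φ (s, y) (0, w)) := by
    rw [hcomp.fderiv]; rfl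
  rw [hfd, ← fderiv_v hv] at hswap
  exact hswap

include hv hφ hode in
lemma hasDerivAt_aM (y : E2) (i j : Fin 2) (s : ℝ) :
    HasDerivAt (fun s' => aM φ s' y i j)
      (aM φ s y 0 j * BM v s (φ s y) i 0 + aM φ s y 1 j * BM v s (φ s y) i 1) s := by
  have h := (PiLp.proj (𝕜 := ℝ) 2 (fun _ : Fin 2 => ℝ) i).hasFDerivAt.comp_hasDerivAt s
    (hasDerivAt_A hv hφ hode y (e j) s)
  have hval : (PiLp.proj (𝕜 := ℝ) 2 (fun _ : Fin 2 => ℝ) i)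
        (fderiv ℝ (v s) (φ s y) (fderiv ℝ (fun p : ℝ × E2 => φ p.1 p.2) (s, y) (0, e j)))
      = aM φ s y 0 j * BM v s (φ s y) i 0 + aM φ s y 1 j * BM v s (φ s y) i 1 := by
    rw [apply_decomp (fderiv ℝ (v s) (φ s y)) (fderiv ℝ (fun p : ℝ × E2 => φ p.1 p.2) (s, y) (0, e j))]
    simp [aM, BM, mul_comm]
  rw [hval] at h
  exact h

include hv hφ hode in
lemma hasDerivAt_dM (y : E2) (s : ℝ) :
    HasDerivAt (fun s' => dM φ s' y) (trB v s (φ s y) * dM φ s y) s := by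
  have h00 := hasDerivAt_aM hv hφ hode y 0 0 s
  have h01 := hasDerivAt_aM hv hφ hode y 0 1 s
  have h10 := hasDerivAt_aM hv hφ hode y 1 0 s
  have h11 := hasDerivAt_aM hv hφ hode y 1 1 s
  have h := (h00.mul h11).sub (h01.mul h10)
  refine h.congr_deriv ?_
  simp only [dM, trB]
  ring

include hφ in
lemma cont_aM (i j : Fin 2) :
    Continuous fun p : ℝ × E2 => aM φ p.1 p.2 i j := by
  have h1 : Continuous (fderiv ℝ (fun p : ℝ × E2 => φ p.1 p.2)) :=
    (contDiff_fderiv _ hφ).continuous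
  exact (continuous_apply i).comp ((PiLp.continuous_ofLp (p := 2) (β := fun _ : Fin 2 => ℝ)).comp
    ((ContinuousLinearMap.apply ℝ E2 (((0 : ℝ), e j) : ℝ × E2)).continuous.comp h1))

include hφ in
lemma cont_dM : Continuous fun p : ℝ × E2 => dM φ p.1 p.2 :=
  ((cont_aM hφ 0 0).mul (cont_aM hφ 1 1)).sub ((cont_aM hφ 0 1).mul (cont_aM hφ 1 0))

include hv in
lemma cont_BM_comp {g : ℝ × E2 → E2} (hg : Continuous g) (i k : Fin 2) :
    Continuous fun p : ℝ × E2 => BM v p.1 (g p) i k := by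
  have h1 : Continuous (fderiv ℝ (fun p : ℝ × E2 => v p.1 p.2)) :=
    (contDiff_fderiv _ hv).continuous
  have heq : (fun p : ℝ × E2 => BM v p.1 (g p) i k)
      = fun p : ℝ × E2 => fderiv ℝ (fun p : ℝ × E2 => v p.1 p.2) (p.1, g p) (0, e k) i :=
    funext fun p => by rw [BM, fderiv_v hv]
  rw [heq]
  exact (continuous_apply i).comp ((PiLp.continuous_ofLp (p := 2) (β := fun _ : Fin 2 => ℝ)).comp
    ((ContinuousLinearMap.apply ℝ E2 (((0 : ℝ), e k) : ℝ × E2)).continuous.comp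
      (h1.comp (continuous_fst.prodMk hg))))

include hv hφ hode in
lemma dM_pos (s : ℝ) (y : E2) (hφ0 : φ 0 = id) : 0 < dM φ s y := by
  have hφc : Continuous fun p : ℝ × E2 => φ p.1 p.2 := hφ.continuous
  set θ : ℝ → ℝ := fun s' => trB v s' (φ s' y) with hθdef
  have hθc : Continuous θ := by
    have h1 : Continuous fun s' : ℝ => ((s', y) : ℝ × E2) :=
      continuous_id.prodMk continuous_const
    have h := ((cont_BM_comp hv (g := fun p : ℝ × E2 => φ p.1 p.2) hφc 0 0).add
      (cont_BM_comp hv (g := fun p : ℝ × E2 => φ p.1 p.2) hφc 1 1)).comp h1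
    exact h
  set I : ℝ → ℝ := fun s' => ∫ τ in (0:ℝ)..s', θ τ with hIdef
  have hI : ∀ s', HasDerivAt I (θ s') s' := fun s' =>
    (hθc.integral_hasStrictDerivAt 0 s').hasDerivAt
  set c : ℝ → ℝ := fun s' => dM φ s' y * Real.exp (-I s') with hcdef
  have hc : ∀ s', HasDerivAt c 0 s' := by
    intro s'
    have h := (hasDerivAt_dM hv hφ hode y s').mul (((hI s').neg).exp)
    refine h.congr_deriv ?_
    simp only [hθdef]
    ring
  have hconst : ∀ s', c s' = c 0 := by
    intro s'
    exact is_const_of_deriv_eq_zero (fun x => (hc x).differentiableAt)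
      (fun x => (hc x).deriv) s' 0
  have hd0 : dM φ 0 y = 1 := by
    have ha0 : ∀ i j : Fin 2, aM φ 0 y i j = e j i := by
      intro i j
      rw [aM, ← fderiv_phi hφ, hφ0]
      simp
    simp [dM, ha0, e, EuclideanSpace.single_apply]
  have hc0 : c 0 = 1 := by
    simp [hcdef, hIdef, hd0]
  have hds : dM φ s y = Real.exp (I s) := by
    have h := (hconst s).trans hc0
    have := congrArg (fun z => z * Real.exp (I s)) h
    simpa [hcdef, mul_assoc, ← Real.exp_add] using this
  rw [hds]
  exact Real.exp_pos _

include hφ in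
lemma det_eq_dM (s : ℝ) (y : E2) : (fderiv ℝ (φ s) y).det = dM φ s y := by
  rw [clm_det, fderiv_phi hφ, fderiv_phi hφ, dM, aM, aM, aM, aM]
  ring

include hv hφ hode in
lemma change_of_var (hφ0 : φ 0 = id) (hbij : ∀ t, Function.Bijective (φ t))
    {V : Set E2} (hVm : MeasurableSet V) (s : ℝ) (g : E2 → ℝ) :
    ∫ x in φ s '' V, g x = ∫ y in V, dM φ s y * g (φ s y) := by
  have hφs : Differentiable ℝ (φ s) := fun x =>
    (hasFDerivAt_curry_right _ hφ s x).differentiableAt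
  rw [integral_image_eq_integral_abs_det_fderiv_smul volume hVm
    (fun x _ => (hφs x).hasFDerivAt.hasFDerivWithinAt) ((hbij s).injective.injOn) g]
  refine setIntegral_congr_fun hVm fun x _ => ?_
  rw [smul_eq_mul, det_eq_dM hφ, abs_of_pos (dM_pos hv hφ hode s x hφ0)]

include hv in
lemma pointwise_G' {f : ℝ → E2 → ℝ}
    (hf : ContDiff ℝ ∞ (fun p : ℝ × E2 => f p.1 p.2)) (t : ℝ) (x : E2) :
    deriv (fun τ => f τ x) t + ∑ i : Fin 2, fderiv ℝ (fun y => f t y * v t y i) x (e i)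
      = trB v t x * f t x + fderiv ℝ (fun p : ℝ × E2 => f p.1 p.2) (t, x) (1, v t x) := by
  set Fu : ℝ × E2 → ℝ := fun p => f p.1 p.2 with hFudef
  set Vu : ℝ × E2 → E2 := fun p => v p.1 p.2 with hVudef
  have hderiv : deriv (fun τ => f τ x) t = fderiv ℝ Fu (t, x) (1, 0) :=
    (hasDerivAt_curry_left Fu hf t x).deriv
  have hterm : ∀ i : Fin 2, fderiv ℝ (fun y => f t y * v t y i) x (e i)
      = f t x * (fderiv ℝ Vu (t, x) (0, e i) i) + v t x i * fderiv ℝ Fu (t, x) (0, e i) := by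
    intro i
    have hfx := hasFDerivAt_curry_right Fu hf t x
    have hvx := (PiLp.proj (𝕜 := ℝ) 2 (fun _ : Fin 2 => ℝ) i).hasFDerivAt.comp x
      (hasFDerivAt_curry_right Vu hv t x)
    have hmul : HasFDerivAt (fun y => f t y * v t y i)
        (f t x • ((PiLp.proj (𝕜 := ℝ) 2 (fun _ : Fin 2 => ℝ) i).comp
            ((fderiv ℝ Vu (t, x)).comp (ContinuousLinearMap.inr ℝ ℝ E2))) +
          v t x i • ((fderiv ℝ Fu (t, x)).comp (ContinuousLinearMap.inr ℝ ℝ E2))) x := hfx.mul hvx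
    rw [hmul.fderiv]
    simp [ContinuousLinearMap.smul_apply, smul_eq_mul]
  have hDfuv : fderiv ℝ Fu (t, x) ((0 : ℝ), v t x)
      = v t x 0 * fderiv ℝ Fu (t, x) (0, e 0) + v t x 1 * fderiv ℝ Fu (t, x) (0, e 1) := by
    rw [pair_decomp (v t x), _root_.map_add, _root_.map_smul, _root_.map_smul]
    simp [smul_eq_mul]
  have hsplit : fderiv ℝ Fu (t, x) (1, v t x)
      = fderiv ℝ Fu (t, x) (1, 0) + fderiv ℝ Fu (t, x) ((0 : ℝ), v t x) := by
    rw [← _root_.map_add]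
    norm_num
  have hBi : ∀ i : Fin 2, BM v t x i i = fderiv ℝ Vu (t, x) (0, e i) i := by
    intro i
    rw [BM, fderiv_v hv]
  rw [hderiv, Fin.sum_univ_two, hterm 0, hterm 1, hsplit, hDfuv, trB, hBi 0, hBi 1]
  ring

end Flow


/-- Reynolds transport theorem in divergence form: for a compact measurable
region `V ⊆ ℝ²` transported by the flow `φ` of a smooth velocity field `v`,
and a smooth density `f`, the time derivative of `∫_{φ(t,·)''V} f(t,x) dx`
equals `∫_{φ(t,·)''V} (∂f/∂t + div(f v)) dx`. -/
theorem reynolds_transport_divergence_form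
    (v φ : ℝ → EuclideanSpace ℝ (Fin 2) → EuclideanSpace ℝ (Fin 2))
    (hv : ContDiff ℝ ∞ (fun p : ℝ × EuclideanSpace ℝ (Fin 2) => v p.1 p.2))
    (hφ : ContDiff ℝ ∞ (fun p : ℝ × EuclideanSpace ℝ (Fin 2) => φ p.1 p.2))
    (hφ0 : φ 0 = id)
    (hbij : ∀ t, Function.Bijective (φ t))
    (hode : ∀ (x : EuclideanSpace ℝ (Fin 2)) (t : ℝ),
      HasDerivAt (fun s => φ s x) (v t (φ t x)) t)
    (V : Set (EuclideanSpace ℝ (Fin 2)))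
    (hVc : IsCompact V) (hVm : MeasurableSet V)
    (f : ℝ → EuclideanSpace ℝ (Fin 2) → ℝ)
    (hf : ContDiff ℝ ∞ (fun p : ℝ × EuclideanSpace ℝ (Fin 2) => f p.1 p.2))
    (t : ℝ) :
    HasDerivAt (fun s => ∫ x in φ s '' V, f s x)
      (∫ x in φ t '' V,
        (deriv (fun τ => f τ x) t +
          ∑ i : Fin 2,
            fderiv ℝ (fun y => f t y * v t y i) x (EuclideanSpace.single i 1))) t := by
  set Fu : ℝ × E2 → ℝ := fun p => f p.1 p.2 with hFudef
  have hφc : Continuous fun p : ℝ × E2 => φ p.1 p.2 := hφ.continuous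
  have hfc : Continuous Fu := hf.continuous
  have hvc : Continuous fun p : ℝ × E2 => v p.1 p.2 := hv.continuous
  set G : ℝ → E2 → ℝ := fun s y => dM φ s y * f s (φ s y) with hGdef
  set G' : ℝ → E2 → ℝ := fun s y =>
    trB v s (φ s y) * dM φ s y * f s (φ s y)
      + dM φ s y * fderiv ℝ Fu (s, φ s y) (1, v s (φ s y)) with hG'def
  have hGderiv : ∀ (y : E2) (s : ℝ), HasDerivAt (fun s' => G s' y) (G' s y) s := by
    intro y s
    have part2 : HasDerivAt (fun s' => f s' (φ s' y))
        (fderiv ℝ Fu (s, φ s y) (1, v s (φ s y))) s :=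
      ((hf.differentiable h1le (s, φ s y)).hasFDerivAt.comp_hasDerivAt s
        ((hasDerivAt_id s).prodMk (hode y s)) :)
    have h := (hasDerivAt_dM hv hφ hode y s).mul part2
    refine h.congr_deriv ?_
    all_goals simp only [hG'def]
  have hGc : Continuous fun p : ℝ × E2 => G p.1 p.2 :=
    (cont_dM hφ).mul (hfc.comp (continuous_fst.prodMk hφc))
  have hG'c : Continuous fun p : ℝ × E2 => G' p.1 p.2 := by
    have h1 : Continuous fun p : ℝ × E2 => trB v p.1 (φ p.1 p.2) :=
      (cont_BM_comp hv hφc 0 0).add (cont_BM_comp hv hφc 1 1)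
    have h2 : Continuous fun p : ℝ × E2 =>
        fderiv ℝ Fu (p.1, φ p.1 p.2) (1, v p.1 (φ p.1 p.2)) := by
      have hD : Continuous fun p : ℝ × E2 => fderiv ℝ Fu (p.1, φ p.1 p.2) :=
        (contDiff_fderiv Fu hf).continuous.comp (continuous_fst.prodMk hφc)
      have hw : Continuous fun p : ℝ × E2 => (((1:ℝ), v p.1 (φ p.1 p.2)) : ℝ × E2) :=
        continuous_const.prodMk (hvc.comp (continuous_fst.prodMk hφc))
      exact isBoundedBilinearMap_apply.continuous.comp (hD.prodMk hw)
    exact ((h1.mul (cont_dM hφ)).mul (hfc.comp (continuous_fst.prodMk hφc))).add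
      ((cont_dM hφ).mul h2)
  set μ := volume.restrict V with hμdef
  obtain ⟨C, hC⟩ := (IsCompact.prod (isCompact_Icc (a := t - 1) (b := t + 1)) hVc
    ).exists_bound_of_continuousOn hG'c.continuousOn
  have hbound : ∀ᵐ y ∂μ, ∀ s ∈ Metric.ball t 1, ‖G' s y‖ ≤ C := by
    rw [hμdef, ae_restrict_iff' hVm]
    refine Filter.Eventually.of_forall fun y hy => fun s hs => ?_
    have h2 := abs_lt.1 (by rwa [Metric.mem_ball, Real.dist_eq] at hs)
    exact hC (s, y) ⟨⟨by linarith [h2.1], by linarith [h2.2]⟩, hy⟩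
  have key := hasDerivAt_integral_of_dominated_loc_of_deriv_le
    (F := fun s y => G s y) (F' := fun s y => G' s y) (μ := μ) (x₀ := t)
    (bound := fun _ => C) (Metric.ball_mem_nhds t one_pos)
    (Filter.Eventually.of_forall fun s =>
      (hGc.comp (Continuous.prodMk_right s)).aestronglyMeasurable)
    ((hGc.comp (Continuous.prodMk_right t)).continuousOn.integrableOn_compact hVc)
    ((hG'c.comp (Continuous.prodMk_right t)).aestronglyMeasurable)
    hbound
    (by rw [hμdef]; exact integrableOn_const hVc.measure_lt_top.ne)
    (Filter.Eventually.of_forall fun y s hs => hGderiv y s)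
  have hfun : (fun s => ∫ x in φ s '' V, f s x) = fun s => ∫ y, G s y ∂μ :=
    funext fun s => change_of_var hv hφ hode hφ0 hbij hVm s (f s)
  have hvals : (∫ y, G' t y ∂μ) = ∫ x in φ t '' V,
      (deriv (fun τ => f τ x) t +
        ∑ i : Fin 2, fderiv ℝ (fun y => f t y * v t y i) x (EuclideanSpace.single i 1)) := by
    rw [change_of_var hv hφ hode hφ0 hbij hVm t _]
    refine setIntegral_congr_fun hVm fun y _ => ?_
    have hp := pointwise_G' hv hf t (φ t y)
    simp only [e] at hp
    rw [hG'def, hp]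
    ring
  rw [hfun, ← hvals]
  exact key.2
end
end

section
/- Let f, g : ℝ² → ℝ be 4 times continuously differentiable, fix c = (c₁, c₂) ∈ ℝ², and for h > 0 let F_h = {c₁} × [c₂ − h/2, c₂ + h/2] be the vertical segment of length h centered at c. Then there exist C > 0 and h₀ > 0 such that for all 0 < h < h₀, | (1/h) ∫_{F_h} f g dl − ( (1/h) ∫_{F_h} f dl )( (1/h) ∫_{F_h} g dl ) − (h²/12) (∂f/∂x₂)(c) (∂g/∂x₂)(c) | ≤ C h⁴. -/
open MeasureTheory intervalIntegral Set

lemma chain_bound {ψ φ : ℝ → ℝ} (hd : ∀ t, HasDerivAt ψ (φ t) t) (h0 : ψ 0 = 0)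
    (hc : Continuous φ) {K : ℝ} {k : ℕ}
    (hb : ∀ t ∈ Set.Icc (0:ℝ) 1, |φ t| ≤ K * t ^ k) :
    ∀ t ∈ Set.Icc (0:ℝ) 1, |ψ t| ≤ (K / (k + 1)) * t ^ (k + 1) := by
  intro t ht
  obtain ⟨ht0, ht1⟩ := ht
  have hFTC : ∫ s in (0:ℝ)..t, φ s = ψ t - ψ 0 :=
    intervalIntegral.integral_eq_sub_of_hasDerivAt (fun x _ => hd x)
      (hc.intervalIntegrable 0 t)
  have h1 : |ψ t| = |∫ s in (0:ℝ)..t, φ s| := by rw [hFTC, h0, sub_zero]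
  rw [h1]
  calc |∫ s in (0:ℝ)..t, φ s| ≤ ∫ s in (0:ℝ)..t, |φ s| :=
        intervalIntegral.abs_integral_le_integral_abs ht0
    _ ≤ ∫ s in (0:ℝ)..t, K * s ^ k := by
        apply intervalIntegral.integral_mono_on ht0
        · exact (hc.abs).intervalIntegrable 0 t
        · exact (continuous_const.mul (continuous_pow k)).intervalIntegrable 0 t
        · intro x hx
          exact hb x ⟨hx.1, hx.2.trans ht1⟩
    _ = (K / (k + 1)) * t ^ (k + 1) := by
        rw [intervalIntegral.integral_const_mul, integral_pow]
        have : ((k:ℝ) + 1) ≠ 0 := by positivity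
        field_simp
        simp

lemma key_quad' (F F1 F2 F3 F4 : ℝ → ℝ) (c : ℝ)
    (hFc : Continuous F) (hF4c : Continuous F4)
    (h01 : ∀ x, HasDerivAt F (F1 x) x) (h12 : ∀ x, HasDerivAt F1 (F2 x) x)
    (h23 : ∀ x, HasDerivAt F2 (F3 x) x) (h34 : ∀ x, HasDerivAt F3 (F4 x) x) :
    ∃ M > (0:ℝ), ∀ h : ℝ, 0 < h → h ≤ 1 →
      |(∫ s in (c - h/2)..(c + h/2), F s) - h * F c - h^3/24 * F2 c| ≤ M * h ^ 5 := by
  have hF1c : Continuous F1 := continuous_iff_continuousAt.mpr fun x => (h12 x).continuousAt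
  have hF2c : Continuous F2 := continuous_iff_continuousAt.mpr fun x => (h23 x).continuousAt
  have hF3c : Continuous F3 := continuous_iff_continuousAt.mpr fun x => (h34 x).continuousAt
  -- bound on F4
  obtain ⟨x₀, hx₀mem, hx₀⟩ := isCompact_Icc.exists_isMaxOn
    (Set.nonempty_Icc.mpr (by linarith : c - 1 ≤ c + 1)) (hF4c.abs.continuousOn)
  set K : ℝ := |F4 x₀| + 1 with hKdef
  have hK0 : (0:ℝ) < K := by positivity
  have hKb : ∀ y ∈ Icc (c - 1) (c + 1), |F4 y| ≤ K := by
    intro y hy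
    have h1 : |F4 y| ≤ |F4 x₀| := hx₀ hy
    have h2 : |F4 x₀| ≤ K := by rw [hKdef]; linarith
    linarith
  -- inner affine maps
  have hplus : ∀ t : ℝ, HasDerivAt (fun t : ℝ => c + t/2) (1/2) t := fun t =>
    ((hasDerivAt_id t).div_const 2).const_add c
  have hminus : ∀ t : ℝ, HasDerivAt (fun t : ℝ => c - t/2) (-(1/2)) t := fun t =>
    ((hasDerivAt_id t).div_const 2).const_sub c
  have hcp : Continuous fun t : ℝ => c + t/2 := continuous_const.add (continuous_id.div_const 2)
  have hcm : Continuous fun t : ℝ => c - t/2 := continuous_const.sub (continuous_id.div_const 2)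
  have hcomp_p : ∀ (u u' : ℝ → ℝ), (∀ x, HasDerivAt u (u' x) x) →
      ∀ t : ℝ, HasDerivAt (fun t : ℝ => u (c + t/2)) (u' (c + t/2) * (1/2)) t := by
    intro u u' hu t
    exact HasDerivAt.comp t (hu (c + t/2)) (hplus t)
  have hcomp_m : ∀ (u u' : ℝ → ℝ), (∀ x, HasDerivAt u (u' x) x) →
      ∀ t : ℝ, HasDerivAt (fun t : ℝ => u (c - t/2)) (u' (c - t/2) * (-(1/2))) t := by
    intro u u' hu t
    exact HasDerivAt.comp t (hu (c - t/2)) (hminus t)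
  -- antiderivative of F
  have hΦ : ∀ x, HasDerivAt (fun x : ℝ => ∫ t in c..x, F t) (F x) x := fun x =>
    (hFc.integral_hasStrictDerivAt c x).hasDerivAt
  -- ψ4 bound
  have hb4 : ∀ t ∈ Icc (0:ℝ) 1,
      |(F3 (c + t/2) - F3 (c - t/2))/16| ≤ (K/16) * t ^ 1 := by
    intro t ht
    have hint : (∫ x in (c - t/2)..(c + t/2), F4 x) = F3 (c + t/2) - F3 (c - t/2) :=
      intervalIntegral.integral_eq_sub_of_hasDerivAt (fun x _ => h34 x)
        (hF4c.intervalIntegrable _ _)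
    have hb : ‖∫ x in (c - t/2)..(c + t/2), F4 x‖ ≤ K * |(c + t/2) - (c - t/2)| := by
      apply intervalIntegral.norm_integral_le_of_norm_le_const
      intro x hx
      rw [Set.uIoc_of_le (by linarith [ht.1] : c - t/2 ≤ c + t/2)] at hx
      rw [Real.norm_eq_abs]
      exact hKb x ⟨by linarith [hx.1.le, ht.2], by linarith [hx.2, ht.2]⟩
    rw [Real.norm_eq_abs] at hb
    have habs : |(c + t/2) - (c - t/2)| = t := by
      rw [show (c + t/2) - (c - t/2) = t by ring, abs_of_nonneg ht.1]
    rw [habs] at hb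
    rw [abs_div, ← hint]
    rw [show |(16:ℝ)| = 16 by norm_num]
    rw [pow_one]
    linarith
  -- ψ3
  have hd3 : ∀ t : ℝ, HasDerivAt
      (fun t : ℝ => (F2 (c + t/2) + F2 (c - t/2))/8 - F2 c / 4)
      ((F3 (c + t/2) - F3 (c - t/2))/16) t := by
    intro t
    have := (((hcomp_p F2 F3 h23 t).add (hcomp_m F2 F3 h23 t)).div_const 8).sub_const (F2 c / 4)
    convert this using 1
    · rfl
    · rfl
    · rfl
    · ring
  have hc4 : Continuous fun t : ℝ => (F3 (c + t/2) - F3 (c - t/2))/16 :=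
    (((hF3c.comp hcp).sub (hF3c.comp hcm)).div_const 16)
  have hb3 := chain_bound hd3 (by norm_num; try ring) hc4 hb4
  have hb3' : ∀ t ∈ Icc (0:ℝ) 1,
      |(F2 (c + t/2) + F2 (c - t/2))/8 - F2 c / 4| ≤ (K/32) * t ^ 2 := by
    intro t ht
    refine (hb3 t ht).trans (le_of_eq ?_)
    push_cast; ring
  -- ψ2
  have hd2 : ∀ t : ℝ, HasDerivAt
      (fun t : ℝ => (F1 (c + t/2) - F1 (c - t/2))/4 - t/4 * F2 c)
      ((F2 (c + t/2) + F2 (c - t/2))/8 - F2 c / 4) t := by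
    intro t
    have h1 : HasDerivAt (fun t : ℝ => t/4 * F2 c) (1/4 * F2 c) t :=
      ((hasDerivAt_id t).div_const 4).mul_const (F2 c)
    have := (((hcomp_p F1 F2 h12 t).sub (hcomp_m F1 F2 h12 t)).div_const 4).sub h1
    convert this using 1
    · rfl
    · rfl
    · rfl
    · ring
  have hc3 : Continuous fun t : ℝ => (F2 (c + t/2) + F2 (c - t/2))/8 - F2 c / 4 :=
    ((((hF2c.comp hcp).add (hF2c.comp hcm)).div_const 8).sub continuous_const)
  have hb2 := chain_bound hd2 (by norm_num; try ring) hc3 hb3'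
  have hb2' : ∀ t ∈ Icc (0:ℝ) 1,
      |(F1 (c + t/2) - F1 (c - t/2))/4 - t/4 * F2 c| ≤ (K/96) * t ^ 3 := by
    intro t ht
    refine (hb2 t ht).trans (le_of_eq ?_)
    push_cast; ring
  -- ψ1
  have hd1 : ∀ t : ℝ, HasDerivAt
      (fun t : ℝ => (F (c + t/2) + F (c - t/2))/2 - F c - t^2/8 * F2 c)
      ((F1 (c + t/2) - F1 (c - t/2))/4 - t/4 * F2 c) t := by
    intro t
    have h1 : HasDerivAt (fun t : ℝ => t^2/8 * F2 c) ((2 * t ^ 1)/8 * F2 c) t :=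
      ((hasDerivAt_pow 2 t).div_const 8).mul_const (F2 c)
    have := ((((hcomp_p F F1 h01 t).add (hcomp_m F F1 h01 t)).div_const 2).sub_const (F c)).sub h1
    convert this using 1
    · rfl
    · rfl
    · rfl
    · ring
  have hc2 : Continuous fun t : ℝ => (F1 (c + t/2) - F1 (c - t/2))/4 - t/4 * F2 c :=
    (((hF1c.comp hcp).sub (hF1c.comp hcm)).div_const 4).sub
      ((continuous_id.div_const 4).mul continuous_const)
  have hb1 := chain_bound hd1 (by norm_num; try ring) hc2 hb2'
  have hb1' : ∀ t ∈ Icc (0:ℝ) 1,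
      |(F (c + t/2) + F (c - t/2))/2 - F c - t^2/8 * F2 c| ≤ (K/384) * t ^ 4 := by
    intro t ht
    refine (hb1 t ht).trans (le_of_eq ?_)
    push_cast; ring
  -- ψ0
  have hd0 : ∀ t : ℝ, HasDerivAt
      (fun t : ℝ => (∫ s in c..(c + t/2), F s) - (∫ s in c..(c - t/2), F s)
        - t * F c - t^3/24 * F2 c)
      ((F (c + t/2) + F (c - t/2))/2 - F c - t^2/8 * F2 c) t := by
    intro t
    have h1 : HasDerivAt (fun t : ℝ => t * F c) (1 * F c) t :=
      (hasDerivAt_id t).mul_const (F c)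
    have h2 : HasDerivAt (fun t : ℝ => t^3/24 * F2 c) ((3 * t ^ 2)/24 * F2 c) t :=
      ((hasDerivAt_pow 3 t).div_const 24).mul_const (F2 c)
    have := (((hcomp_p _ F hΦ t).sub (hcomp_m _ F hΦ t)).sub h1).sub h2
    convert this using 1
    · rfl
    · rfl
    · rfl
    · ring
  have hc1 : Continuous fun t : ℝ => (F (c + t/2) + F (c - t/2))/2 - F c - t^2/8 * F2 c :=
    ((((hFc.comp hcp).add (hFc.comp hcm)).div_const 2).sub continuous_const).sub
      (((continuous_pow 2).div_const 8).mul continuous_const)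
  have hb0 := chain_bound hd0 (by norm_num; try ring) hc1 hb1'
  refine ⟨K/1920, by positivity, ?_⟩
  intro h hh0 hh1
  have hsplit : (∫ s in (c - h/2)..(c + h/2), F s)
      = (∫ s in c..(c + h/2), F s) - (∫ s in c..(c - h/2), F s) := by
    have hadd := intervalIntegral.integral_add_adjacent_intervals
      (hFc.intervalIntegrable (μ := volume) (c - h/2) c)
      (hFc.intervalIntegrable (μ := volume) c (c + h/2))
    rw [← hadd, intervalIntegral.integral_symm c (c - h/2)]
    ring
  have := hb0 h ⟨hh0.le, hh1⟩
  rw [hsplit]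
  refine this.trans (le_of_eq ?_)
  push_cast; ring
lemma unpack4 {F : ℝ → ℝ} (hF : ContDiff ℝ 4 F) :
    Differentiable ℝ F ∧ Differentiable ℝ (deriv F) ∧ Differentiable ℝ (deriv (deriv F)) ∧
      Differentiable ℝ (deriv (deriv (deriv F))) ∧
      Continuous (deriv (deriv (deriv (deriv F)))) := by
  rw [show (4 : WithTop ℕ∞) = 3 + 1 by norm_num, contDiff_succ_iff_deriv] at hF
  obtain ⟨hFd, -, hF1⟩ := hF
  rw [show (3 : WithTop ℕ∞) = 2 + 1 by norm_num, contDiff_succ_iff_deriv] at hF1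
  obtain ⟨hF1d, -, hF2⟩ := hF1
  rw [show (2 : WithTop ℕ∞) = 1 + 1 by norm_num, contDiff_succ_iff_deriv] at hF2
  obtain ⟨hF2d, -, hF3⟩ := hF2
  rw [contDiff_one_iff_deriv] at hF3
  exact ⟨hFd, hF1d, hF2d, hF3.1, hF3.2⟩

lemma key_quad (F : ℝ → ℝ) (hF : ContDiff ℝ 4 F) (c : ℝ) :
    ∃ M > (0:ℝ), ∀ h : ℝ, 0 < h → h ≤ 1 →
      |(∫ s in (c - h/2)..(c + h/2), F s) - h * F c - h^3/24 * deriv (deriv F) c|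
        ≤ M * h ^ 5 := by
  obtain ⟨h0, h1, h2, h3, h4c⟩ := unpack4 hF
  exact key_quad' F (deriv F) (deriv (deriv F)) (deriv (deriv (deriv F)))
    (deriv (deriv (deriv (deriv F)))) c h0.continuous h4c
    (fun x => (h0 x).hasDerivAt) (fun x => (h1 x).hasDerivAt)
    (fun x => (h2 x).hasDerivAt) (fun x => (h3 x).hasDerivAt)


lemma combine_bound (PI FI GI A B A1 B1 A2 B2 MF MG MP h : ℝ)
    (hh0 : 0 < h) (hh1' : h ≤ 1) (hMF0 : 0 < MF) (hMG0 : 0 < MG)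
    (heP : |PI - A * B - h^2/24 * (A2 * B + 2 * A1 * B1 + A * B2)| ≤ MP * h^4)
    (heF : |FI - A - h^2/24 * A2| ≤ MF * h^4)
    (heG : |GI - B - h^2/24 * B2| ≤ MG * h^4) :
    |PI - FI * GI - h^2/12 * A1 * B1|
      ≤ (MP + |A2 * B2| / 576 + |A| * MG + |A2| * MG / 24 + MF * |B| + MF * |B2| / 24
          + MF * MG + 1) * h^4 := by
  have h2le : h ^ 2 ≤ 1 := by nlinarith
  have h4le : h ^ 4 ≤ 1 := by nlinarith
  have h4pos : (0:ℝ) < h ^ 4 := by positivity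
  set eP : ℝ := PI - A * B - h^2/24 * (A2 * B + 2 * A1 * B1 + A * B2) with hePdef
  set eF : ℝ := FI - A - h^2/24 * A2 with heFdef
  set eG : ℝ := GI - B - h^2/24 * B2 with heGdef
  have hEq : PI - FI * GI - h^2/12 * A1 * B1
      = eP - h^4/576 * (A2 * B2) - A * eG - h^2/24 * A2 * eG - eF * B
        - h^2/24 * eF * B2 - eF * eG := by
    rw [hePdef, heFdef, heGdef]; ring
  have ht2 : |h^4/576 * (A2 * B2)| ≤ |A2 * B2| / 576 * h^4 := by
    rw [abs_mul, abs_of_nonneg (by positivity : (0:ℝ) ≤ h^4/576)]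
    nlinarith [abs_nonneg (A2 * B2)]
  have ht3 : |A * eG| ≤ |A| * MG * h^4 := by
    rw [abs_mul]
    nlinarith [abs_nonneg A, abs_nonneg eG, mul_le_mul_of_nonneg_left heG (abs_nonneg A)]
  have ht4 : |h^2/24 * A2 * eG| ≤ |A2| * MG / 24 * h^4 := by
    rw [abs_mul, abs_mul, abs_of_nonneg (by positivity : (0:ℝ) ≤ h^2/24)]
    have s1 : h^2/24 * |A2| * |eG| ≤ h^2/24 * |A2| * (MG * h^4) :=
      mul_le_mul_of_nonneg_left heG (by positivity)
    have s2 : h^2/24 * |A2| * (MG * h^4) ≤ 1/24 * |A2| * (MG * h^4) := by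
      refine mul_le_mul_of_nonneg_right ?_ (by positivity)
      exact mul_le_mul_of_nonneg_right (by linarith) (abs_nonneg A2)
    have s3 : 1/24 * |A2| * (MG * h^4) = |A2| * MG / 24 * h^4 := by ring
    linarith
  have ht5 : |eF * B| ≤ MF * |B| * h^4 := by
    rw [abs_mul]
    nlinarith [abs_nonneg B, abs_nonneg eF, mul_le_mul_of_nonneg_right heF (abs_nonneg B)]
  have ht6 : |h^2/24 * eF * B2| ≤ MF * |B2| / 24 * h^4 := by
    rw [abs_mul, abs_mul, abs_of_nonneg (by positivity : (0:ℝ) ≤ h^2/24)]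
    have s1 : h^2/24 * |eF| * |B2| ≤ h^2/24 * (MF * h^4) * |B2| :=
      mul_le_mul_of_nonneg_right (mul_le_mul_of_nonneg_left heF (by positivity))
        (abs_nonneg B2)
    have s2 : h^2/24 * (MF * h^4) * |B2| ≤ 1/24 * (MF * h^4) * |B2| :=
      mul_le_mul_of_nonneg_right
        (mul_le_mul_of_nonneg_right (by linarith) (by positivity)) (abs_nonneg B2)
    have s3 : 1/24 * (MF * h^4) * |B2| = MF * |B2| / 24 * h^4 := by ring
    linarith
  have ht7 : |eF * eG| ≤ MF * MG * h^4 := by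
    rw [abs_mul]
    have s1 : |eF| * |eG| ≤ (MF * h^4) * (MG * h^4) :=
      mul_le_mul heF heG (abs_nonneg eG) (by positivity)
    have s2 : (MF * h^4) * (MG * h^4) = (MF * MG * h^4) * h^4 := by ring
    have s3 : (MF * MG * h^4) * h^4 ≤ MF * MG * h^4 :=
      mul_le_of_le_one_right (by positivity) h4le
    linarith
  have tri : |eP - h^4/576 * (A2 * B2) - A * eG - h^2/24 * A2 * eG - eF * B
        - h^2/24 * eF * B2 - eF * eG|
      ≤ |eP| + |h^4/576 * (A2 * B2)| + |A * eG| + |h^2/24 * A2 * eG| + |eF * B|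
        + |h^2/24 * eF * B2| + |eF * eG| := by
    calc |eP - h^4/576 * (A2 * B2) - A * eG - h^2/24 * A2 * eG - eF * B
          - h^2/24 * eF * B2 - eF * eG|
        ≤ |eP - h^4/576 * (A2 * B2) - A * eG - h^2/24 * A2 * eG - eF * B
          - h^2/24 * eF * B2| + |eF * eG| := abs_sub _ _
      _ ≤ |eP - h^4/576 * (A2 * B2) - A * eG - h^2/24 * A2 * eG - eF * B|
          + |h^2/24 * eF * B2| + |eF * eG| := by gcongr ?_ + _ ; exact abs_sub _ _
      _ ≤ |eP - h^4/576 * (A2 * B2) - A * eG - h^2/24 * A2 * eG|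
          + |eF * B| + |h^2/24 * eF * B2| + |eF * eG| := by
            gcongr ?_ + _ + _ ; exact abs_sub _ _
      _ ≤ |eP - h^4/576 * (A2 * B2) - A * eG|
          + |h^2/24 * A2 * eG| + |eF * B| + |h^2/24 * eF * B2| + |eF * eG| := by
            gcongr ?_ + _ + _ + _ ; exact abs_sub _ _
      _ ≤ |eP - h^4/576 * (A2 * B2)|
          + |A * eG| + |h^2/24 * A2 * eG| + |eF * B| + |h^2/24 * eF * B2| + |eF * eG| := by
            gcongr ?_ + _ + _ + _ + _ ; exact abs_sub _ _
      _ ≤ |eP| + |h^4/576 * (A2 * B2)|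
          + |A * eG| + |h^2/24 * A2 * eG| + |eF * B| + |h^2/24 * eF * B2| + |eF * eG| := by
            gcongr ?_ + _ + _ + _ + _ + _ ; exact abs_sub _ _
  rw [hEq]
  have hfinal := tri.trans (by linarith [heP, ht2, ht3, ht4, ht5, ht6, ht7] :
    |eP| + |h^4/576 * (A2 * B2)| + |A * eG| + |h^2/24 * A2 * eG| + |eF * B|
      + |h^2/24 * eF * B2| + |eF * eG|
    ≤ (MP + |A2 * B2| / 576 + |A| * MG + |A2| * MG / 24 + MF * |B| + MF * |B2| / 24
      + MF * MG + 1) * h^4)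
  exact hfinal

/-- Product quadrature identity on a face: for `C⁴` functions `f, g` and the
vertical segment `F_h = {c₁} × [c₂ - h/2, c₂ + h/2]`, the face average of the
product `f g` equals the product of the face averages plus `h²/12` times the
product of the transverse derivatives at `c`, up to `O(h⁴)`. -/
theorem face_product_quadrature (c : ℝ × ℝ) (f g : ℝ × ℝ → ℝ)
    (hf : ContDiff ℝ 4 f) (hg : ContDiff ℝ 4 g) :
    ∃ C > (0 : ℝ), ∃ h₀ > (0 : ℝ), ∀ h : ℝ, 0 < h → h < h₀ →
      |(1 / h) * (∫ s in (c.2 - h / 2)..(c.2 + h / 2), f (c.1, s) * g (c.1, s))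
        - ((1 / h) * ∫ s in (c.2 - h / 2)..(c.2 + h / 2), f (c.1, s)) *
          ((1 / h) * ∫ s in (c.2 - h / 2)..(c.2 + h / 2), g (c.1, s))
        - (h ^ 2 / 12) * deriv (fun s => f (c.1, s)) c.2 * deriv (fun s => g (c.1, s)) c.2|
        ≤ C * h ^ 4 := by
  have hFcd : ContDiff ℝ 4 (fun s => f (c.1, s)) :=
    hf.comp (ContDiff.prodMk (contDiff_const (c := c.1)) contDiff_id)
  have hGcd : ContDiff ℝ 4 (fun s => g (c.1, s)) :=
    hg.comp (ContDiff.prodMk (contDiff_const (c := c.1)) contDiff_id)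
  have hPcd : ContDiff ℝ 4 (fun s => f (c.1, s) * g (c.1, s)) := hFcd.mul hGcd
  obtain ⟨hfd, hf1d, -, -, -⟩ := unpack4 hFcd
  obtain ⟨hgd, hg1d, -, -, -⟩ := unpack4 hGcd
  obtain ⟨MF, hMF0, hMF⟩ := key_quad _ hFcd c.2
  obtain ⟨MG, hMG0, hMG⟩ := key_quad _ hGcd c.2
  obtain ⟨MP, hMP0, hMP⟩ := key_quad _ hPcd c.2
  -- second derivative of the product
  have e1 : deriv (fun s => f (c.1, s) * g (c.1, s))
      = fun x => deriv (fun s => f (c.1, s)) x * g (c.1, x)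
          + f (c.1, x) * deriv (fun s => g (c.1, s)) x :=
    funext fun x => deriv_mul (hfd x) (hgd x)
  have e2 : HasDerivAt (fun x => deriv (fun s => f (c.1, s)) x * g (c.1, x)
          + f (c.1, x) * deriv (fun s => g (c.1, s)) x)
      ((deriv (deriv (fun s => f (c.1, s))) c.2 * g (c.1, c.2)
          + deriv (fun s => f (c.1, s)) c.2 * deriv (fun s => g (c.1, s)) c.2)
        + (deriv (fun s => f (c.1, s)) c.2 * deriv (fun s => g (c.1, s)) c.2
          + f (c.1, c.2) * deriv (deriv (fun s => g (c.1, s))) c.2)) c.2 :=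
    ((hf1d c.2).hasDerivAt.mul (hgd c.2).hasDerivAt).add
      ((hfd c.2).hasDerivAt.mul (hg1d c.2).hasDerivAt)
  have hP2 : deriv (deriv (fun s => f (c.1, s) * g (c.1, s))) c.2
      = deriv (deriv (fun s => f (c.1, s))) c.2 * g (c.1, c.2)
        + 2 * deriv (fun s => f (c.1, s)) c.2 * deriv (fun s => g (c.1, s)) c.2
        + f (c.1, c.2) * deriv (deriv (fun s => g (c.1, s))) c.2 := by
    rw [e1, e2.deriv]; ring
  refine ⟨MP + |deriv (deriv (fun s => f (c.1, s))) c.2 * deriv (deriv (fun s => g (c.1, s))) c.2| / 576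
      + |f (c.1, c.2)| * MG + |deriv (deriv (fun s => f (c.1, s))) c.2| * MG / 24
      + MF * |g (c.1, c.2)| + MF * |deriv (deriv (fun s => g (c.1, s))) c.2| / 24
      + MF * MG + 1, by positivity, 1, one_pos, ?_⟩
  intro h hh0 hh1
  have hh1' : h ≤ 1 := hh1.le
  have avg_bound : ∀ (u : ℝ → ℝ) (M D : ℝ),
      (|(∫ s in (c.2 - h/2)..(c.2 + h/2), u s) - h * u c.2 - h^3/24 * D| ≤ M * h ^ 5) →
      |(1/h) * (∫ s in (c.2 - h/2)..(c.2 + h/2), u s) - u c.2 - h^2/24 * D| ≤ M * h ^ 4 := by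
    intro u M D hu
    have heq : (1/h) * (∫ s in (c.2 - h/2)..(c.2 + h/2), u s) - u c.2 - h^2/24 * D
        = (1/h) * ((∫ s in (c.2 - h/2)..(c.2 + h/2), u s) - h * u c.2 - h^3/24 * D) := by
      field_simp
    rw [heq, abs_mul, abs_of_pos (by positivity : (0:ℝ) < 1/h)]
    calc (1/h) * |(∫ s in (c.2 - h/2)..(c.2 + h/2), u s) - h * u c.2 - h^3/24 * D|
        ≤ (1/h) * (M * h ^ 5) := by gcongr
      _ = M * h ^ 4 := by field_simp
  have heF := avg_bound _ MF _ (hMF h hh0 hh1')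
  have heG := avg_bound _ MG _ (hMG h hh0 hh1')
  have heP := avg_bound _ MP _ (hMP h hh0 hh1')
  rw [hP2] at heP
  exact combine_bound _ _ _ _ _ _ _ _ _ _ _ _ _ hh0 hh1' hMF0 hMG0 heP heF heG
end

section
/- Fix x ∈ ℝ², let d ∈ {1,2} with d' the other index, and let g : ℝ² → ℝ be 3 times continuously differentiable. For h > 0 and j ∈ ℤ², let B_h(j) = h^{−1} ∫ g dl over the face { x + h(j + e^d) + s h e^{d'} : s ∈ [0,1] } (the higher face of cell j in dimension d). Then there exist C > 0 and h₀ > 0 such that for all 0 < h < h₀, | (B_h(e^{d'}) − B_h(−e^{d'}))/(2h) − h^{−1} ∫ (∂g/∂x_{d'}) dl over the face { x + h e^d + s h e^{d'} : s ∈ [0,1] } | ≤ C h². -/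
open MeasureTheory

noncomputable section

/-- The average of `f` over the segment from `a` to `b` (equal to `1/|b-a|`
times the one-dimensional Lebesgue integral of `f` along the segment). -/
def segAvg (f : EuclideanSpace ℝ (Fin 2) → ℝ) (a b : EuclideanSpace ℝ (Fin 2)) : ℝ :=
  ∫ s in (0 : ℝ)..1, f (a + s • (b - a))

/-- The `i`-th standard basis vector of ℝ². -/
def ev (i : Fin 2) : EuclideanSpace ℝ (Fin 2) := EuclideanSpace.single i 1


lemma aux_taylor (φ0 φ1 φ2 φ3 : ℝ → ℝ)
    (hc1 : Continuous φ1) (hc2 : Continuous φ2) (hc3 : Continuous φ3)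
    (hd0 : ∀ t, HasDerivAt φ0 (φ1 t) t)
    (hd1 : ∀ t, HasDerivAt φ1 (φ2 t) t)
    (hd2 : ∀ t, HasDerivAt φ2 (φ3 t) t)
    (M a h : ℝ) (hh : 0 < h)
    (hM : ∀ t, a - h ≤ t → t ≤ a + h → |φ3 t| ≤ M) :
    |φ0 (a + h) - φ0 (a - h) - 2 * h * φ1 a| ≤ M * h ^ 3 / 3 := by
  set E' : ℝ → ℝ := fun t => φ1 (a + t) + φ1 (a - t) - 2 * φ1 a with hE'def
  have hE'cont : Continuous E' := by
    apply Continuous.sub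
    · exact (hc1.comp (continuous_const.add continuous_id)).add
        (hc1.comp (continuous_const.sub continuous_id))
    · exact continuous_const
  -- step 0 : bound on the "second derivative" of the error
  have step0 : ∀ t ∈ Set.Icc (0:ℝ) h, |φ2 (a + t) - φ2 (a - t)| ≤ 2 * M * t := by
    intro t ⟨ht0, hth⟩
    have key : ∫ u in (a-t)..(a+t), φ3 u = φ2 (a + t) - φ2 (a - t) :=
      intervalIntegral.integral_eq_sub_of_hasDerivAt (fun u _ => hd2 u)
        (hc3.intervalIntegrable _ _)
    rw [← key]
    have : ∀ u ∈ Set.uIoc (a-t) (a+t), ‖φ3 u‖ ≤ M := by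
      intro u hu
      rw [Set.uIoc_of_le (by linarith)] at hu
      exact hM u (by linarith [hu.1]) (by linarith [hu.2])
    calc |∫ u in (a-t)..(a+t), φ3 u| ≤ M * |(a+t) - (a-t)| :=
          intervalIntegral.norm_integral_le_of_norm_le_const this
      _ = 2 * M * t := by rw [abs_of_nonneg (by linarith)]; ring
  -- step 1 : bound on E'
  have step1 : ∀ t ∈ Set.Icc (0:ℝ) h, |E' t| ≤ M * t ^ 2 := by
    intro t ⟨ht0, hth⟩
    have hE'' : ∀ u, HasDerivAt E' (φ2 (a + u) - φ2 (a - u)) u := by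
      intro u
      have h1 : HasDerivAt (fun u : ℝ => φ1 (a + u)) (φ2 (a + u)) u := by
        have := (hd1 (a + u)).comp u ((hasDerivAt_id u).const_add a)
        simpa [Function.comp_def] using this
      have h2 : HasDerivAt (fun u : ℝ => φ1 (a - u)) (-φ2 (a - u)) u := by
        have := (hd1 (a - u)).comp u ((hasDerivAt_id u).const_sub a)
        simpa [Function.comp_def] using this
      simpa [sub_eq_add_neg, hE'def] using (h1.add h2).sub_const (2 * φ1 a)
    have key : ∫ u in (0:ℝ)..t, (φ2 (a + u) - φ2 (a - u)) = E' t - E' 0 :=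
      intervalIntegral.integral_eq_sub_of_hasDerivAt (fun u _ => hE'' u)
        (((hc2.comp (continuous_const.add continuous_id)).sub
          (hc2.comp (continuous_const.sub continuous_id))).intervalIntegrable _ _)
    have hE'0 : E' 0 = 0 := by simp [hE'def]; ring
    have habs : |E' t| ≤ ∫ u in (0:ℝ)..t, |φ2 (a + u) - φ2 (a - u)| := by
      have h1 : E' t = ∫ u in (0:ℝ)..t, (φ2 (a + u) - φ2 (a - u)) := by
        rw [key, hE'0, sub_zero]
      rw [h1]
      exact intervalIntegral.abs_integral_le_integral_abs ht0
    have hcontabs : Continuous fun u : ℝ => |φ2 (a + u) - φ2 (a - u)| :=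
      ((hc2.comp (continuous_const.add continuous_id)).sub
          (hc2.comp (continuous_const.sub continuous_id))).abs
    have hmono : (∫ u in (0:ℝ)..t, |φ2 (a + u) - φ2 (a - u)|) ≤ ∫ u in (0:ℝ)..t, 2 * M * u := by
      apply intervalIntegral.integral_mono_on ht0
        (hcontabs.intervalIntegrable _ _)
        ((continuous_const.mul continuous_id).intervalIntegrable _ _)
      intro u ⟨hu0, hut⟩
      exact step0 u ⟨hu0, le_trans hut hth⟩
    have hcomp : (∫ u in (0:ℝ)..t, 2 * M * u) = M * t ^ 2 := by
      rw [intervalIntegral.integral_const_mul]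
      simp [integral_id]
      ring
    linarith
  -- final step
  set E : ℝ → ℝ := fun t => φ0 (a + t) - φ0 (a - t) - 2 * t * φ1 a with hEdef
  have hE : ∀ t, HasDerivAt E (E' t) t := by
    intro t
    have h1 : HasDerivAt (fun t : ℝ => φ0 (a + t)) (φ1 (a + t)) t := by
      have := (hd0 (a + t)).comp t ((hasDerivAt_id t).const_add a)
      simpa [Function.comp_def] using this
    have h2 : HasDerivAt (fun t : ℝ => φ0 (a - t)) (-φ1 (a - t)) t := by
      have := (hd0 (a - t)).comp t ((hasDerivAt_id t).const_sub a)
      simpa [Function.comp_def] using this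
    have h3 : HasDerivAt (fun t : ℝ => 2 * t * φ1 a) (2 * φ1 a) t := by
      have := ((hasDerivAt_id t).const_mul 2).mul_const (φ1 a)
      simpa using this
    have h4 : HasDerivAt (fun t : ℝ => φ0 (a + t) - φ0 (a - t) - 2 * t * φ1 a)
        (φ1 (a + t) - -φ1 (a - t) - 2 * φ1 a) t := (h1.sub h2).sub h3
    simpa [hEdef, hE'def, sub_neg_eq_add] using h4
  have key : ∫ t in (0:ℝ)..h, E' t = E h - E 0 :=
    intervalIntegral.integral_eq_sub_of_hasDerivAt (fun t _ => hE t)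
      (hE'cont.intervalIntegrable _ _)
  have hE0 : E 0 = 0 := by simp [hEdef]
  have habs : |E h| ≤ ∫ t in (0:ℝ)..h, |E' t| := by
    have h1 : E h = ∫ t in (0:ℝ)..h, E' t := by rw [key, hE0, sub_zero]
    rw [h1]
    exact intervalIntegral.abs_integral_le_integral_abs hh.le
  have hmono : (∫ t in (0:ℝ)..h, |E' t|) ≤ ∫ t in (0:ℝ)..h, M * t ^ 2 := by
    apply intervalIntegral.integral_mono_on hh.le
      (hE'cont.abs.intervalIntegrable _ _)
      ((continuous_const.mul (continuous_pow 2)).intervalIntegrable _ _)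
    exact step1
  have hcomp : (∫ t in (0:ℝ)..h, M * t ^ 2) = M * h ^ 3 / 3 := by
    rw [intervalIntegral.integral_const_mul, integral_pow]
    norm_num
    ring
  have : |E h| ≤ M * h ^ 3 / 3 := by linarith
  simpa [hEdef] using this


set_option maxHeartbeats 1000000 in
/-- Second-order accuracy of the centered transverse-gradient difference
`G^⊥`: for a `C³` function `g`, the centered difference of face averages over
the higher faces (in dimension `d`) of the cells `j = ±e^{d'}` approximates the
face average of `∂g/∂x_{d'}` over the higher face of the cell `j = 0` to
`O(h²)`. -/
theorem transverse_gradient_second_order (x : EuclideanSpace ℝ (Fin 2))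
    (d d' : Fin 2) (hdd' : d' ≠ d)
    (g : EuclideanSpace ℝ (Fin 2) → ℝ) (hg : ContDiff ℝ 3 g) :
    ∃ C > (0 : ℝ), ∃ h₀ > (0 : ℝ), ∀ h : ℝ, 0 < h → h < h₀ →
      |(segAvg g (x + h • ev d + h • ev d') (x + h • ev d + h • ev d' + h • ev d')
          - segAvg g (x + h • ev d - h • ev d') (x + h • ev d - h • ev d' + h • ev d'))
          / (2 * h)
        - segAvg (fun y => fderiv ℝ g y (ev d')) (x + h • ev d) (x + h • ev d + h • ev d')|
        ≤ C * h ^ 2 := by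
  have hv : ev d' = ev d' := rfl
  set v : EuclideanSpace ℝ (Fin 2) := ev d' with hvdef
  set G1 : EuclideanSpace ℝ (Fin 2) → ℝ := fun y => fderiv ℝ g y v with hG1def
  set G2 : EuclideanSpace ℝ (Fin 2) → ℝ := fun y => fderiv ℝ G1 y v with hG2def
  set G3 : EuclideanSpace ℝ (Fin 2) → ℝ := fun y => fderiv ℝ G2 y v with hG3def
  have hg1 : ContDiff ℝ 2 G1 := (hg.fderiv_right (by norm_num)).clm_apply contDiff_const
  have hg2 : ContDiff ℝ 1 G2 := (hg1.fderiv_right (by norm_num)).clm_apply contDiff_const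
  have hg3 : Continuous G3 :=
    ((hg2.fderiv_right (m := 0) (by norm_num)).clm_apply contDiff_const).continuous
  obtain ⟨M0, hM0⟩ := (isCompact_closedBall x 3).exists_bound_of_continuousOn hg3.continuousOn
  set M := max M0 0 with hMdef
  have hMnn : 0 ≤ M := le_max_right _ _
  refine ⟨M / 6 + 1, by linarith, 1, one_pos, ?_⟩
  intro h hh0 hh1
  set p := x + h • ev d with hpdef
  have hvnorm : ‖v‖ = 1 := by simp [hvdef, ev]
  have hdnorm : ‖ev d‖ = (1:ℝ) := by simp [ev]
  have hmem : ∀ t : ℝ, |t| ≤ 2 * h → p + t • v ∈ Metric.closedBall x 3 := by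
    intro t ht
    rw [Metric.mem_closedBall, dist_eq_norm]
    have he : p + t • v - x = h • ev d + t • v := by rw [hpdef]; module
    rw [he]
    calc ‖h • ev d + t • v‖ ≤ ‖h • ev d‖ + ‖t • v‖ := norm_add_le _ _
      _ = |h| + |t| := by
          rw [norm_smul, norm_smul, hdnorm, hvnorm, Real.norm_eq_abs, Real.norm_eq_abs]; ring
      _ ≤ 3 := by rw [abs_of_pos hh0]; linarith
  have hMb : ∀ t : ℝ, |t| ≤ 2 * h → |G3 (p + t • v)| ≤ M := by
    intro t ht
    have := hM0 _ (hmem t ht)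
    rw [Real.norm_eq_abs] at this
    exact le_trans this (le_max_left _ _)
  set φ0 : ℝ → ℝ := fun t => g (p + t • v) with hφ0def
  set φ1 : ℝ → ℝ := fun t => G1 (p + t • v) with hφ1def
  set φ2 : ℝ → ℝ := fun t => G2 (p + t • v) with hφ2def
  set φ3 : ℝ → ℝ := fun t => G3 (p + t • v) with hφ3def
  have hline : ∀ t : ℝ, HasDerivAt (fun t : ℝ => p + t • v) v t := by
    intro t
    simpa using ((hasDerivAt_id t).smul_const v).const_add p
  have hlc : Continuous fun t : ℝ => p + t • v :=
    continuous_const.add (continuous_id.smul continuous_const)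
  have hd0 : ∀ t, HasDerivAt φ0 (φ1 t) t := fun t =>
    ((hg.differentiable (by norm_num) (p + t • v)).hasFDerivAt).comp_hasDerivAt t (hline t)
  have hd1 : ∀ t, HasDerivAt φ1 (φ2 t) t := fun t => by
    rw [hφ1def, hφ2def, hG2def]; exact ((hg1.differentiable (by norm_num) (p + t • v)).hasFDerivAt).comp_hasDerivAt t (hline t)
  have hd2 : ∀ t, HasDerivAt φ2 (φ3 t) t := fun t => by
    rw [hφ2def, hφ3def, hG3def]; exact ((hg2.differentiable (by norm_num) (p + t • v)).hasFDerivAt).comp_hasDerivAt t (hline t)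
  have hc1 : Continuous φ1 := hg1.continuous.comp hlc
  have hc2 : Continuous φ2 := hg2.continuous.comp hlc
  have hc3 : Continuous φ3 := hg3.comp hlc
  have hc0 : Continuous φ0 := hg.continuous.comp hlc
  -- pointwise estimate
  have hpt : ∀ s ∈ Set.Icc (0:ℝ) 1,
      |(φ0 (s * h + h) - φ0 (s * h - h)) / (2 * h) - φ1 (s * h)| ≤ M * h ^ 2 / 6 := by
    intro s ⟨hs0, hs1⟩
    have hb : ∀ t, s * h - h ≤ t → t ≤ s * h + h → |φ3 t| ≤ M := by
      intro t h1 h2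
      apply hMb
      rw [abs_le]
      constructor <;> nlinarith
    have key := aux_taylor φ0 φ1 φ2 φ3 hc1 hc2 hc3 hd0 hd1 hd2 M (s * h) h hh0 hb
    have heq : (φ0 (s * h + h) - φ0 (s * h - h)) / (2 * h) - φ1 (s * h)
        = (φ0 (s * h + h) - φ0 (s * h - h) - 2 * h * φ1 (s * h)) / (2 * h) := by
      field_simp
    rw [heq, abs_div, abs_of_pos (show (0:ℝ) < 2 * h by linarith),
      div_le_iff₀ (show (0:ℝ) < 2 * h by linarith)]
    nlinarith [key]
  -- rewrite the segment averages
  have e1 : segAvg g (x + h • ev d + h • ev d') (x + h • ev d + h • ev d' + h • ev d')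
      = ∫ s in (0:ℝ)..1, φ0 (s * h + h) := by
    unfold segAvg
    apply intervalIntegral.integral_congr
    intro s _
    show g _ = g (p + (s * h + h) • v)
    congr 1
    rw [hpdef, hvdef]
    module
  have e2 : segAvg g (x + h • ev d - h • ev d') (x + h • ev d - h • ev d' + h • ev d')
      = ∫ s in (0:ℝ)..1, φ0 (s * h - h) := by
    unfold segAvg
    apply intervalIntegral.integral_congr
    intro s _
    show g _ = g (p + (s * h - h) • v)
    congr 1
    rw [hpdef, hvdef]
    module
  have e3 : segAvg (fun y => fderiv ℝ g y (ev d')) (x + h • ev d) (x + h • ev d + h • ev d')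
      = ∫ s in (0:ℝ)..1, φ1 (s * h) := by
    unfold segAvg
    apply intervalIntegral.integral_congr
    intro s _
    show G1 _ = G1 (p + (s * h) • v)
    congr 1
    rw [hpdef, hvdef]
    module
  rw [e1, e2, e3]
  -- combine integrals
  have hi0p : Continuous fun s : ℝ => φ0 (s * h + h) :=
    hc0.comp ((continuous_id.mul continuous_const).add continuous_const)
  have hi0m : Continuous fun s : ℝ => φ0 (s * h - h) :=
    hc0.comp ((continuous_id.mul continuous_const).sub continuous_const)
  have hi1 : Continuous fun s : ℝ => φ1 (s * h) :=
    hc1.comp (continuous_id.mul continuous_const)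
  have comb : ((∫ s in (0:ℝ)..1, φ0 (s * h + h)) - ∫ s in (0:ℝ)..1, φ0 (s * h - h)) / (2 * h)
      - (∫ s in (0:ℝ)..1, φ1 (s * h))
      = ∫ s in (0:ℝ)..1, ((φ0 (s * h + h) - φ0 (s * h - h)) / (2 * h) - φ1 (s * h)) := by
    rw [← intervalIntegral.integral_sub (hi0p.intervalIntegrable _ _) (hi0m.intervalIntegrable _ _),
      ← intervalIntegral.integral_div,
      ← intervalIntegral.integral_sub
        (f := fun s : ℝ => (φ0 (s * h + h) - φ0 (s * h - h)) / (2 * h))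
        (((hi0p.sub hi0m).div_const _).intervalIntegrable _ _) (hi1.intervalIntegrable _ _)]
  rw [comb]
  have hb : ‖∫ s in (0:ℝ)..1, ((φ0 (s * h + h) - φ0 (s * h - h)) / (2 * h) - φ1 (s * h))‖
      ≤ M * h ^ 2 / 6 * |1 - 0| := by
    apply intervalIntegral.norm_integral_le_of_norm_le_const
    intro s hs
    rw [Set.uIoc_of_le (by norm_num : (0:ℝ) ≤ 1)] at hs
    rw [Real.norm_eq_abs]
    exact hpt s ⟨hs.1.le, hs.2⟩
  rw [Real.norm_eq_abs] at hb
  rw [abs_of_nonneg (by norm_num : (0:ℝ) ≤ 1 - 0)] at hb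
  nlinarith [sq_nonneg h]
end
end
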